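/- arXiv:1307.6039 — 2 statements merged into one kernel-verified Lean document; each statement's English description precedes it below -/
import Mathlib

section
/- Let Γ = ∂D be a C¹ closed connected hypersurface, λ ∈ C⁰(Γ) and μ ∈ C⁰(Γ) such that div_Γ(μ ∇_Γ φ) + λφ = 0 in H^{−1}(Γ) for every φ ∈ H¹(Γ). Then λ = 0 and μ = 0. -/
open MeasureTheory Metric RealInnerProductSpace

open Filter in
/-- Auxiliary vanishing lemma: a continuous function on `Γ` integrating to zero against
a rich enough family of localized nonnegative weights must vanish. -/
lemma key_vanish {d : ℕ} (Γ : Set (EuclideanSpace ℝ (Fin d)))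
    (hΓc : IsCompact Γ) (hΓm : MeasurableSet Γ)
    (σ : Measure (EuclideanSpace ℝ (Fin d))) [IsFiniteMeasure σ]
    (hσpos : ∀ x ∈ Γ, ∀ r > (0:ℝ), 0 < σ (Γ ∩ ball x r))
    (f : EuclideanSpace ℝ (Fin d) → ℂ) (hf : ContinuousOn f Γ)
    (H : ∀ x₀ ∈ Γ, ∀ r > (0:ℝ), ∃ w : EuclideanSpace ℝ (Fin d) → ℝ,
      ContinuousOn w Γ ∧ (∀ x ∈ Γ, 0 ≤ w x) ∧ 0 < w x₀ ∧
      (∀ x ∈ Γ, x ∉ ball x₀ r → w x = 0) ∧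
      ∫ x in Γ, f x * (w x : ℂ) ∂σ = 0) :
    ∀ x₀ ∈ Γ, f x₀ = 0 := by
  intro x₀ hx₀
  by_contra hne
  set c := f x₀ with hc
  set g₀ : EuclideanSpace ℝ (Fin d) → ℝ := fun x => ((starRingEnd ℂ) c * f x).re with hg₀
  have hg₀cont : ContinuousOn g₀ Γ :=
    Complex.continuous_re.comp_continuousOn (continuousOn_const.mul hf)
  have hcpos : 0 < Complex.normSq c := Complex.normSq_pos.mpr hne
  have hg₀x₀ : g₀ x₀ = Complex.normSq c := by
    simp [hg₀, ← hc, Complex.normSq_apply]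
  -- find a radius on which g₀ stays above normSq c / 2
  have hev : ∀ᶠ x in nhdsWithin x₀ Γ, Complex.normSq c / 2 < g₀ x :=
    (hg₀cont x₀ hx₀).eventually (eventually_gt_nhds (by rw [hg₀x₀]; linarith))
  obtain ⟨r₁, hr₁, hball₁⟩ := Metric.mem_nhdsWithin_iff.mp hev
  obtain ⟨w, hwcont, hwnn, hwpos, hwzero, hwint⟩ := H x₀ hx₀ r₁ hr₁
  -- find a radius where w stays above w x₀ / 2
  have hev2 : ∀ᶠ x in nhdsWithin x₀ Γ, w x₀ / 2 < w x :=
    (hwcont x₀ hx₀).eventually (eventually_gt_nhds (by linarith))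
  obtain ⟨r₂, hr₂, hball₂⟩ := Metric.mem_nhdsWithin_iff.mp hev2
  set g : EuclideanSpace ℝ (Fin d) → ℝ := fun x => g₀ x * w x with hg
  have hgcont : ContinuousOn g Γ := hg₀cont.mul hwcont
  have hgint : IntegrableOn g Γ σ := hgcont.integrableOn_compact' hΓc hΓm
  have hgnn : ∀ x ∈ Γ, 0 ≤ g x := by
    intro x hx
    by_cases hxb : x ∈ ball x₀ r₁
    · have h1 : Complex.normSq c / 2 < g₀ x := hball₁ ⟨hxb, hx⟩
      exact mul_nonneg (by linarith) (hwnn x hx)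
    · rw [hg]; simp [hwzero x hx hxb]
  -- the integral of g over Γ is zero
  have hIzero : ∫ x in Γ, g x ∂σ = 0 := by
    have h1 : ∫ x in Γ, ((starRingEnd ℂ) c * (f x * (w x : ℂ))) ∂σ = 0 := by
      rw [integral_const_mul, hwint, mul_zero]
    have h2 : IntegrableOn (fun x => (starRingEnd ℂ) c * (f x * (w x : ℂ))) Γ σ :=
      (continuousOn_const.mul (hf.mul
        (Complex.continuous_ofReal.comp_continuousOn hwcont))).integrableOn_compact' hΓc hΓm
    have h3 : ∫ x in Γ, g x ∂σ =
        ∫ x in Γ, RCLike.re ((starRingEnd ℂ) c * (f x * (w x : ℂ))) ∂σ := by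
      refine integral_congr_ae (Eventually.of_forall fun x => ?_)
      show ((starRingEnd ℂ) c * f x).re * w x = RCLike.re ((starRingEnd ℂ) c * (f x * ((w x : ℝ) : ℂ)))
      rw [RCLike.re_to_complex, ← mul_assoc]
      simp [Complex.mul_re]
    rw [h3, integral_re h2, h1]
    simp
  -- contradiction via positivity on a small ball
  set rm := min r₁ r₂ with hrm
  have hrmpos : 0 < rm := lt_min hr₁ hr₂
  set s : Set (EuclideanSpace ℝ (Fin d)) := Γ ∩ ball x₀ rm with hs
  have hsm : MeasurableSet s := hΓm.inter measurableSet_ball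
  have hspos : 0 < σ s := hσpos x₀ hx₀ rm hrmpos
  set δ := Complex.normSq c / 2 * (w x₀ / 2) with hδ
  have hδpos : 0 < δ := by positivity
  have hlow : ∀ x ∈ s, δ ≤ g x := by
    intro x hx
    obtain ⟨hxΓ, hxb⟩ := hx
    have hxb₁ : x ∈ ball x₀ r₁ := ball_subset_ball (min_le_left _ _) hxb
    have hxb₂ : x ∈ ball x₀ r₂ := ball_subset_ball (min_le_right _ _) hxb
    have h1 : Complex.normSq c / 2 < g₀ x := hball₁ ⟨hxb₁, hxΓ⟩
    have h2 : w x₀ / 2 < w x := hball₂ ⟨hxb₂, hxΓ⟩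
    have : Complex.normSq c / 2 * (w x₀ / 2) ≤ g₀ x * w x := by
      apply mul_le_mul (le_of_lt h1) (le_of_lt h2) (by positivity) (by linarith)
    exact this
  have hint_s : ∫ x in s, g x ∂σ ≥ δ * (σ s).toReal :=
    setIntegral_ge_of_const_le_real hsm (measure_ne_top σ s) hlow
      (hgint.mono_set Set.inter_subset_left)
  have hmono : ∫ x in s, g x ∂σ ≤ ∫ x in Γ, g x ∂σ := by
    apply setIntegral_mono_set hgint
    · filter_upwards [ae_restrict_mem hΓm] with x hx using hgnn x hx
    · exact HasSubset.Subset.eventuallyLE Set.inter_subset_left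
  have htoR : 0 < (σ s).toReal := ENNReal.toReal_pos (ne_of_gt hspos) (measure_ne_top σ s)
  have : (0:ℝ) < δ * (σ s).toReal := by positivity
  linarith [hIzero ▸ hmono, hint_s]

open Filter in
/-- Density lemma: if a continuous (on compact `Γ`) function `f` integrates to zero against
every exponential `x ↦ exp ⟪c, x⟫`, then it integrates to zero against every continuous
function. Uses Stone–Weierstrass. -/
lemma exp_dense_integral_zero {d : ℕ} (Γ : Set (EuclideanSpace ℝ (Fin d)))
    (hΓc : IsCompact Γ) (hΓm : MeasurableSet Γ)
    (σ : Measure (EuclideanSpace ℝ (Fin d))) [IsFiniteMeasure σ]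
    (f : EuclideanSpace ℝ (Fin d) → ℂ) (hf : ContinuousOn f Γ)
    (hexp : ∀ c : EuclideanSpace ℝ (Fin d),
      ∫ x in Γ, f x * ((Real.exp ⟪c, x⟫ : ℝ) : ℂ) ∂σ = 0)
    (w : EuclideanSpace ℝ (Fin d) → ℝ) (hw : Continuous w) :
    ∫ x in Γ, f x * (w x : ℂ) ∂σ = 0 := by
  haveI : CompactSpace ↥Γ := isCompact_iff_compactSpace.mp hΓc
  set S : Set (EuclideanSpace ℝ (Fin d) → ℝ) :=
    {G | ∃ c, G = fun x => Real.exp ⟪c, x⟫} with hS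
  -- continuity of members of the span
  have hcont : ∀ G ∈ Submodule.span ℝ S, Continuous G := by
    intro G hG
    induction hG using Submodule.span_induction with
    | mem G hGS =>
      obtain ⟨c, rfl⟩ := hGS
      exact Real.continuous_exp.comp (continuous_const.inner continuous_id)
    | zero => exact continuous_const
    | add x y hx hy hx' hy' => exact hx'.add hy'
    | smul a x hx hx' => exact hx'.const_smul a
  have hintegr : ∀ G : EuclideanSpace ℝ (Fin d) → ℝ, Continuous G →
      IntegrableOn (fun x => f x * (G x : ℂ)) Γ σ := fun G hG =>
    (hf.mul ((Complex.continuous_ofReal.comp hG).continuousOn)).integrableOn_compact' hΓc hΓm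
  -- the span integrates to zero against f
  have hint0 : ∀ G ∈ Submodule.span ℝ S, ∫ x in Γ, f x * (G x : ℂ) ∂σ = 0 := by
    intro G hG
    induction hG using Submodule.span_induction with
    | mem G hGS =>
      obtain ⟨c, rfl⟩ := hGS
      exact hexp c
    | zero => simp
    | add x y hx hy hx' hy' =>
      have hxe : (fun z => f z * (((x + y) z : ℝ) : ℂ))
          = fun z => f z * (x z : ℂ) + f z * (y z : ℂ) := by
        funext z
        push_cast [Pi.add_apply]
        ring
      rw [hxe, integral_add (hintegr x (hcont x hx)) (hintegr y (hcont y hy)), hx', hy',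
        add_zero]
    | smul a x hx hx' =>
      have hxe : (fun z => f z * (((a • x) z : ℝ) : ℂ))
          = fun z => (a : ℂ) * (f z * (x z : ℂ)) := by
        funext z
        push_cast [Pi.smul_apply, smul_eq_mul]
        ring
      rw [hxe, integral_const_mul, hx', mul_zero]
  -- the subalgebra of continuous functions on Γ generated by exponentials
  set gen : EuclideanSpace ℝ (Fin d) → C(↥Γ, ℝ) := fun c =>
    ⟨fun x => Real.exp ⟪c, (x : EuclideanSpace ℝ (Fin d))⟫,
      Real.continuous_exp.comp (continuous_const.inner continuous_subtype_val)⟩ with hgen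
  set A : Subalgebra ℝ C(↥Γ, ℝ) := Algebra.adjoin ℝ (Set.range gen) with hA
  have hsep : A.SeparatesPoints := by
    intro x y hxy
    have hxyE : (x : EuclideanSpace ℝ (Fin d)) ≠ y := fun h => hxy (Subtype.ext h)
    refine ⟨gen ((x : EuclideanSpace ℝ (Fin d)) - y),
      ⟨gen ((x : EuclideanSpace ℝ (Fin d)) - y), Algebra.subset_adjoin ⟨_, rfl⟩, rfl⟩, ?_⟩
    have hpos : (0:ℝ) < ⟪(x : EuclideanSpace ℝ (Fin d)) - y, (x : EuclideanSpace ℝ (Fin d)) - y⟫ := by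
      rw [real_inner_self_eq_norm_mul_norm]
      have h0 : (0:ℝ) < ‖(x : EuclideanSpace ℝ (Fin d)) - y‖ :=
        norm_pos_iff.mpr (sub_ne_zero.mpr hxyE)
      exact mul_pos h0 h0
    have hne' : ⟪(x : EuclideanSpace ℝ (Fin d)) - y, (x : EuclideanSpace ℝ (Fin d))⟫
        ≠ ⟪(x : EuclideanSpace ℝ (Fin d)) - y, (y : EuclideanSpace ℝ (Fin d))⟫ := by
      intro h
      rw [← sub_eq_zero, ← inner_sub_right] at h
      rw [h] at hpos
      exact lt_irrefl 0 hpos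
    intro h
    exact hne' (Real.exp_injective h)
  -- the span is closed under multiplication
  have hmulS : ∀ G ∈ Submodule.span ℝ S, ∀ H ∈ Submodule.span ℝ S,
      G * H ∈ Submodule.span ℝ S := by
    intro G hG
    induction hG using Submodule.span_induction with
    | mem G hGS =>
      intro H hH
      induction hH using Submodule.span_induction with
      | mem H hHS =>
        obtain ⟨c₁, rfl⟩ := hGS
        obtain ⟨c₂, rfl⟩ := hHS
        refine Submodule.subset_span ⟨c₁ + c₂, ?_⟩
        funext x
        simp [Pi.mul_apply, ← Real.exp_add, inner_add_left]
      | zero => rw [mul_zero]; exact Submodule.zero_mem _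
      | add x y hx hy hx' hy' => rw [mul_add]; exact Submodule.add_mem _ hx' hy'
      | smul a x hx hx' => rw [mul_smul_comm]; exact Submodule.smul_mem _ a hx'
    | zero => intro H hH; rw [zero_mul]; exact Submodule.zero_mem _
    | add x y hx hy hx' hy' =>
      intro H hH
      rw [add_mul]
      exact Submodule.add_mem _ (hx' H hH) (hy' H hH)
    | smul a x hx hx' =>
      intro H hH
      rw [smul_mul_assoc]
      exact Submodule.smul_mem _ a (hx' H hH)
  -- every element of A is the restriction of an element of the span
  have hrepr : ∀ g ∈ A, ∃ G ∈ Submodule.span ℝ S, ∀ x : ↥Γ, G x = g x := by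
    intro g hg
    induction hg using Algebra.adjoin_induction with
    | mem g hgS =>
      obtain ⟨c, rfl⟩ := hgS
      exact ⟨fun x => Real.exp ⟪c, x⟫, Submodule.subset_span ⟨c, rfl⟩, fun x => rfl⟩
    | algebraMap r =>
      refine ⟨r • fun x => Real.exp ⟪(0 : EuclideanSpace ℝ (Fin d)), x⟫,
        Submodule.smul_mem _ r (Submodule.subset_span ⟨0, rfl⟩), fun x => ?_⟩
      simp [Algebra.algebraMap_eq_smul_one]
    | add g h hgA hhA hg' hh' =>
      obtain ⟨G, hGs, hGv⟩ := hg'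
      obtain ⟨H, hHs, hHv⟩ := hh'
      exact ⟨G + H, Submodule.add_mem _ hGs hHs, fun x => by
        simp [Pi.add_apply, hGv x, hHv x]⟩
    | mul g h hgA hhA hg' hh' =>
      obtain ⟨G, hGs, hGv⟩ := hg'
      obtain ⟨H, hHs, hHv⟩ := hh'
      exact ⟨G * H, hmulS G hGs H hHs, fun x => by
        simp [Pi.mul_apply, hGv x, hHv x]⟩
  -- Stone–Weierstrass
  have hSW : A.topologicalClosure = ⊤ :=
    ContinuousMap.subalgebra_topologicalClosure_eq_top_of_separatesPoints A hsep
  set hres : C(↥Γ, ℝ) := ⟨fun x => w x, hw.comp continuous_subtype_val⟩ with hresdef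
  have hmem : hres ∈ closure (A : Set C(↥Γ, ℝ)) := by
    rw [← Subalgebra.topologicalClosure_coe, hSW]
    simp
  obtain ⟨C, hC⟩ := hΓc.exists_bound_of_continuousOn hf
  set I := ∫ x in Γ, f x * (w x : ℂ) ∂σ with hI
  set K := (max C 0) * (σ Γ).toReal with hK
  have hKnn : 0 ≤ K := mul_nonneg (le_max_right _ _) ENNReal.toReal_nonneg
  have hbound : ∀ ε > (0:ℝ), ‖I‖ ≤ K * ε := by
    intro ε hε
    obtain ⟨g, hgA, hgdist⟩ := Metric.mem_closure_iff.mp hmem ε hε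
    obtain ⟨G, hGspan, hGval⟩ := hrepr g hgA
    have hGcont := hcont G hGspan
    have hG0 := hint0 G hGspan
    have happrox : ∀ x ∈ Γ, ‖f x * ((w x : ℂ) - (G x : ℂ))‖ ≤ (max C 0) * ε := by
      intro x hx
      rw [norm_mul]
      have h1 : ‖(w x : ℂ) - (G x : ℂ)‖ ≤ ε := by
        rw [← Complex.ofReal_sub, Complex.norm_real]
        have hle := ContinuousMap.dist_apply_le_dist (f := hres) (g := g) ⟨x, hx⟩
        calc ‖w x - G x‖ = dist (hres ⟨x, hx⟩) (g ⟨x, hx⟩) := by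
              rw [Real.dist_eq, Real.norm_eq_abs]
              congr 1
              show w x - G x = w x - g ⟨x, hx⟩
              rw [hGval ⟨x, hx⟩]
          _ ≤ dist hres g := hle
          _ ≤ ε := le_of_lt hgdist
      exact mul_le_mul ((hC x hx).trans (le_max_left _ _)) h1 (norm_nonneg _)
        (le_max_right _ _)
    have hIsub : I = ∫ x in Γ, f x * ((w x : ℂ) - (G x : ℂ)) ∂σ := by
      rw [show (fun x => f x * ((w x : ℂ) - (G x : ℂ)))
          = fun x => f x * (w x : ℂ) - f x * (G x : ℂ) from funext fun x => by ring]
      rw [integral_sub (hintegr w hw) (hintegr G hGcont), hG0, sub_zero]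
    rw [hIsub]
    calc ‖∫ x in Γ, f x * ((w x : ℂ) - (G x : ℂ)) ∂σ‖
        ≤ (max C 0) * ε * (σ Γ).toReal :=
          norm_setIntegral_le_of_norm_le_const (measure_lt_top σ Γ) happrox
      _ = K * ε := by rw [hK]; ring
  by_contra hne
  have hpos : 0 < ‖I‖ := norm_pos_iff.mpr hne
  have hb := hbound (‖I‖ / (2 * (K + 1))) (by positivity)
  have h2 : K * (‖I‖ / (2 * (K + 1))) = K * ‖I‖ / (2 * (K + 1)) := by ring
  rw [h2, le_div_iff₀ (by positivity)] at hb
  nlinarith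

/-- Let `Γ = ∂D` be the (C¹) closed connected boundary hypersurface of
a bounded domain `D ⊂ ℝ^d` (surface measure `σ`, continuous unit normal `ν`), and
`λ, μ ∈ C⁰(Γ)` such that `div_Γ(μ∇_Γ φ) + λφ = 0` in `H^{−1}(Γ)` for every
`φ ∈ H¹(Γ)`, i.e. (weak formulation, tested in particular against smooth `φ`, `v`)
`∫_Γ (λ φ v − μ ∇_Γ φ · ∇_Γ v) ds = 0`, with `∇_Γ φ = ∇φ − (∇φ·ν)ν`.
Then `λ = 0` and `μ = 0` on `Γ`. -/
theorem stmt12 (d : ℕ) (D : Set (EuclideanSpace ℝ (Fin d)))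
    (hD : IsOpen D) (hDb : Bornology.IsBounded D) (hDne : D.Nonempty)
    (hconn : IsConnected (frontier D))
    (σ : Measure (EuclideanSpace ℝ (Fin d))) [IsFiniteMeasure σ]
    (hσΓ : σ (frontier D)ᶜ = 0)
    (hσpos : ∀ x ∈ frontier D, ∀ r > (0 : ℝ), 0 < σ (frontier D ∩ ball x r))
    (ν : EuclideanSpace ℝ (Fin d) → EuclideanSpace ℝ (Fin d))
    (hνcont : ContinuousOn ν (frontier D)) (hνunit : ∀ x ∈ frontier D, ‖ν x‖ = 1)
    (lam μ : EuclideanSpace ℝ (Fin d) → ℂ)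
    (hlamcont : ContinuousOn lam (frontier D)) (hμcont : ContinuousOn μ (frontier D))
    (hweak : ∀ φ v : EuclideanSpace ℝ (Fin d) → ℝ, ContDiff ℝ (⊤ : ℕ∞) φ → ContDiff ℝ (⊤ : ℕ∞) v →
      ∫ x in frontier D,
        (lam x * (φ x * v x : ℝ)
          - μ x * (⟪gradient φ x - ⟪gradient φ x, ν x⟫ • ν x,
                    gradient v x - ⟪gradient v x, ν x⟫ • ν x⟫ : ℝ)) ∂σ = 0) :
    ∀ x ∈ frontier D, lam x = 0 ∧ μ x = 0 := by
  have hΓm : MeasurableSet (frontier D) := isClosed_frontier.measurableSet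
  have hΓc : IsCompact (frontier D) :=
    Metric.isCompact_of_isClosed_isBounded isClosed_frontier
      (hDb.closure.subset frontier_subset_closure)
  -- exponential test functions, their smoothness and gradients
  have hexpsmooth : ∀ u : EuclideanSpace ℝ (Fin d),
      ContDiff ℝ (⊤ : ℕ∞) (fun z : EuclideanSpace ℝ (Fin d) => Real.exp ⟪u, z⟫) := by
    intro u
    have hlin : ContDiff ℝ (⊤ : ℕ∞) (fun z : EuclideanSpace ℝ (Fin d) => ⟪u, z⟫) :=
      (innerSL ℝ u).contDiff
    exact Real.contDiff_exp.comp hlin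
  have hgradexp : ∀ (u y : EuclideanSpace ℝ (Fin d)),
      HasGradientAt (fun z : EuclideanSpace ℝ (Fin d) => Real.exp ⟪u, z⟫)
        (Real.exp ⟪u, y⟫ • u) y := by
    intro u y
    rw [hasGradientAt_iff_hasFDerivAt]
    have h3 : HasFDerivAt (fun z : EuclideanSpace ℝ (Fin d) => Real.exp ⟪u, z⟫)
        (Real.exp ⟪u, y⟫ • innerSL ℝ u) y :=
      (Real.hasDerivAt_exp _).comp_hasFDerivAt y (innerSL ℝ u).hasFDerivAt
    have htd : (InnerProductSpace.toDual ℝ (EuclideanSpace ℝ (Fin d)))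
        (Real.exp ⟪u, y⟫ • u) = Real.exp ⟪u, y⟫ • innerSL ℝ u := by
      ext z
      simp [real_inner_smul_left]
    rw [htd]
    exact h3
  -- continuous localized bump (no smoothness needed)
  have hbump : ∀ (x₀ : EuclideanSpace ℝ (Fin d)) (r : ℝ), 0 < r →
      ∃ b : EuclideanSpace ℝ (Fin d) → ℝ, Continuous b ∧ (∀ x, 0 ≤ b x) ∧ b x₀ = 1 ∧
        (∀ x, x ∉ ball x₀ r → b x = 0) := by
    intro x₀ r hr
    refine ⟨fun y => max 0 (1 - dist y x₀ / (r/2)), ?_, fun x => le_max_left _ _, ?_, ?_⟩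
    · exact continuous_const.max
        (continuous_const.sub ((continuous_id.dist continuous_const).div_const _))
    · simp
    · intro x hxb
      have h1 : r ≤ dist x x₀ := not_lt.mp (by simpa [mem_ball] using hxb)
      have h2 : (2:ℝ) ≤ dist x x₀ / (r/2) := by
        rw [le_div_iff₀ (by positivity)]
        linarith
      apply max_eq_left
      linarith
  -- Step A : `lam` vanishes on the boundary (valid in any dimension).
  have hlamexp : ∀ c : EuclideanSpace ℝ (Fin d),
      ∫ x in frontier D, lam x * ((Real.exp ⟪c, x⟫ : ℝ) : ℂ) ∂σ = 0 := by
    intro c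
    have h := hweak (fun z => Real.exp ⟪c, z⟫) (fun _ => 1) (hexpsmooth c) contDiff_const
    rw [← h]
    refine integral_congr_ae (Filter.Eventually.of_forall fun x => ?_)
    simp [gradient_const]
  have hlam0 : ∀ x ∈ frontier D, lam x = 0 := by
    refine key_vanish (frontier D) hΓc hΓm σ hσpos lam hlamcont ?_
    intro x₀ hx₀ r hr
    obtain ⟨b, hbc, hbnn, hb1, hb0⟩ := hbump x₀ r hr
    refine ⟨b, hbc.continuousOn, fun x _ => hbnn x, by rw [hb1]; norm_num,
      fun x _ hxb => hb0 x hxb, ?_⟩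
    exact exp_dense_integral_zero (frontier D) hΓc hΓm σ lam hlamcont hlamexp b hbc
  rcases Nat.lt_or_ge d 2 with hd | hd
  · -- low dimensions : the hypotheses are contradictory
    intro x hx
    exfalso
    interval_cases d
    · -- d = 0 : the space is trivial, no unit normal can exist
      have hsub : Subsingleton (EuclideanSpace ℝ (Fin 0)) := by
        refine Module.finrank_zero_iff (R := ℝ) |>.mp ?_
        simp
      have h := hνunit x hx
      rw [Subsingleton.elim (ν x) 0, norm_zero] at h
      norm_num at h
    · -- d = 1 : a bounded nonempty open subset of ℝ cannot have connected frontier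
      set L : EuclideanSpace ℝ (Fin 1) ≃L[ℝ] ℝ :=
        (EuclideanSpace.equiv (Fin 1) ℝ).trans (ContinuousLinearEquiv.funUnique (Fin 1) ℝ ℝ)
        with hLdef
      set D' : Set ℝ := ⇑L '' D with hD'def
      have hD'open : IsOpen D' := L.toHomeomorph.isOpenMap D hD
      have hD'b : Bornology.IsBounded D' := L.toContinuousLinearMap.lipschitz.isBounded_image hDb
      have hfr : frontier D' = ⇑L '' frontier D := (L.toHomeomorph.image_frontier D).symm
      have hconn' : IsConnected (frontier D') := by
        rw [hfr]; exact hconn.image _ L.continuous.continuousOn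
      obtain ⟨a, haD⟩ := hDne
      have haD' : L a ∈ D' := ⟨a, haD, rfl⟩
      have hclb : Bornology.IsBounded (closure D') := hD'b.closure
      have hclcomp : IsCompact (closure D') :=
        Metric.isCompact_of_isClosed_isBounded isClosed_closure hclb
      have hclne : (closure D').Nonempty := ⟨L a, subset_closure haD'⟩
      set p := sInf (closure D') with hpdef
      set q := sSup (closure D') with hqdef
      have hpmem : p ∈ closure D' := hclcomp.sInf_mem hclne
      have hqmem : q ∈ closure D' := hclcomp.sSup_mem hclne
      have hpD : p ∉ D' := by
        intro hpD
        obtain ⟨ε, hε, hball⟩ := Metric.isOpen_iff.mp hD'open p hpD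
        have hmem : p - ε/2 ∈ D' := by
          apply hball
          rw [mem_ball, Real.dist_eq, show p - ε/2 - p = -(ε/2) by ring, abs_neg,
            abs_of_pos (by linarith)]
          linarith
        have hle := csInf_le hclcomp.bddBelow (subset_closure hmem)
        rw [← hpdef] at hle
        linarith
      have hqD : q ∉ D' := by
        intro hqD
        obtain ⟨ε, hε, hball⟩ := Metric.isOpen_iff.mp hD'open q hqD
        have hmem : q + ε/2 ∈ D' := by
          apply hball
          rw [mem_ball, Real.dist_eq, show q + ε/2 - q = ε/2 by ring,
            abs_of_pos (by linarith)]
          linarith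
        have hle := le_csSup hclcomp.bddAbove (subset_closure hmem)
        rw [← hqdef] at hle
        linarith
      have hpf : p ∈ frontier D' := by rw [hD'open.frontier_eq]; exact ⟨hpmem, hpD⟩
      have hqf : q ∈ frontier D' := by rw [hD'open.frontier_eq]; exact ⟨hqmem, hqD⟩
      have hIcc : Set.Icc p q ⊆ frontier D' := hconn'.isPreconnected.Icc_subset hpf hqf
      have haI : L a ∈ Set.Icc p q :=
        ⟨csInf_le hclcomp.bddBelow (subset_closure haD'),
          le_csSup hclcomp.bddAbove (subset_closure haD')⟩
      have hmem := hIcc haI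
      rw [hD'open.frontier_eq] at hmem
      exact hmem.2 haD'
  · -- main case `d ≥ 2`
    -- existence of a unit tangent vector at every boundary point
    have hexe : ∀ x ∈ frontier D, ∃ e : EuclideanSpace ℝ (Fin d), ‖e‖ = 1 ∧ ⟪e, ν x⟫ = 0 := by
      intro x hx
      have hν0 : ν x ≠ 0 := by
        intro h0
        have h := hνunit x hx
        rw [h0, norm_zero] at h
        norm_num at h
      have hfin : Module.finrank ℝ ↥(ℝ ∙ (ν x))ᗮ = d - 1 := by
        have h1 := Submodule.finrank_add_finrank_orthogonal (K := (ℝ ∙ (ν x)))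
        rw [finrank_span_singleton hν0, finrank_euclideanSpace_fin] at h1
        omega
      have hKnt : Nontrivial ↥(ℝ ∙ (ν x))ᗮ :=
        Module.finrank_pos_iff (R := ℝ) |>.mp (by omega)
      obtain ⟨v, hv0⟩ := exists_ne (0 : ↥(ℝ ∙ (ν x))ᗮ)
      have hvne : (v : EuclideanSpace ℝ (Fin d)) ≠ 0 := by
        simpa [Submodule.coe_eq_zero] using hv0
      have hvorth : ⟪ν x, (v : EuclideanSpace ℝ (Fin d))⟫ = 0 :=
        v.2 (ν x) (Submodule.mem_span_singleton_self (ν x))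
      refine ⟨‖(v : EuclideanSpace ℝ (Fin d))‖⁻¹ • (v : EuclideanSpace ℝ (Fin d)), ?_, ?_⟩
      · rw [norm_smul, norm_inv, norm_norm, inv_mul_cancel₀ (norm_ne_zero_iff.mpr hvne)]
      · rw [real_inner_smul_left, real_inner_comm, hvorth, mul_zero]
    -- the key pairing identities from the weak formulation, with exponential test functions
    have hker : ∀ (u w x : EuclideanSpace ℝ (Fin d)),
        (⟪gradient (fun z => Real.exp ⟪u, z⟫) x
            - ⟪gradient (fun z => Real.exp ⟪u, z⟫) x, ν x⟫ • ν x,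
          gradient (fun z => Real.exp ⟪w, z⟫) x
            - ⟪gradient (fun z => Real.exp ⟪w, z⟫) x, ν x⟫ • ν x⟫ : ℝ)
        = ⟪u - ⟪u, ν x⟫ • ν x, w - ⟪w, ν x⟫ • ν x⟫
            * (Real.exp ⟪u, x⟫ * Real.exp ⟪w, x⟫) := by
      intro u w x
      rw [(hgradexp u x).gradient, (hgradexp w x).gradient]
      rw [show Real.exp ⟪u, x⟫ • u - ⟪Real.exp ⟪u, x⟫ • u, ν x⟫ • ν x
          = Real.exp ⟪u, x⟫ • (u - ⟪u, ν x⟫ • ν x) by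
        rw [real_inner_smul_left, mul_smul, smul_sub]]
      rw [show Real.exp ⟪w, x⟫ • w - ⟪Real.exp ⟪w, x⟫ • w, ν x⟫ • ν x
          = Real.exp ⟪w, x⟫ • (w - ⟪w, ν x⟫ • ν x) by
        rw [real_inner_smul_left, mul_smul, smul_sub]]
      rw [real_inner_smul_left, real_inner_smul_right]
      ring
    have hpaircont : ∀ u w : EuclideanSpace ℝ (Fin d), ContinuousOn
        (fun x => μ x * ((⟪u - ⟪u, ν x⟫ • ν x, w - ⟪w, ν x⟫ • ν x⟫ : ℝ) : ℂ)
          * ((Real.exp ⟪u, x⟫ * Real.exp ⟪w, x⟫ : ℝ) : ℂ)) (frontier D) := by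
      intro u w
      refine ContinuousOn.mul (ContinuousOn.mul hμcont ?_) ?_
      · exact Complex.continuous_ofReal.comp_continuousOn
          ((continuousOn_const.sub ((continuousOn_const.inner (𝕜 := ℝ) hνcont).smul hνcont)).inner (𝕜 := ℝ)
            (continuousOn_const.sub ((continuousOn_const.inner (𝕜 := ℝ) hνcont).smul hνcont)))
      · refine (Complex.continuous_ofReal.comp ?_).continuousOn
        exact (Real.continuous_exp.comp (continuous_const.inner continuous_id)).mul
          (Real.continuous_exp.comp (continuous_const.inner continuous_id))
    have hpair : ∀ u w : EuclideanSpace ℝ (Fin d),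
        ∫ x in frontier D,
          μ x * ((⟪u - ⟪u, ν x⟫ • ν x, w - ⟪w, ν x⟫ • ν x⟫ : ℝ) : ℂ)
            * ((Real.exp ⟪u, x⟫ * Real.exp ⟪w, x⟫ : ℝ) : ℂ) ∂σ = 0 := by
      intro u w
      have h := hweak _ _ (hexpsmooth u) (hexpsmooth w)
      have h2 : ∫ x in frontier D,
          -(μ x * ((⟪u - ⟪u, ν x⟫ • ν x, w - ⟪w, ν x⟫ • ν x⟫ : ℝ) : ℂ)
            * ((Real.exp ⟪u, x⟫ * Real.exp ⟪w, x⟫ : ℝ) : ℂ)) ∂σ = 0 := by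
        rw [← h]
        refine integral_congr_ae ?_
        filter_upwards [ae_restrict_mem hΓm] with x hx
        rw [hlam0 x hx, zero_mul, zero_sub, hker u w x]
        push_cast
        ring
      rwa [integral_neg, neg_eq_zero] at h2
    -- conclude for μ
    have hμ0 : ∀ x ∈ frontier D, μ x = 0 := by
      intro x₀ hx₀
      obtain ⟨e, he1, he2⟩ := hexe x₀ hx₀
      -- consider f z := μ z * ⟪P z e, P z e⟫
      set F : EuclideanSpace ℝ (Fin d) → ℂ :=
        fun x => μ x * ((⟪e - ⟪e, ν x⟫ • ν x, e - ⟪e, ν x⟫ • ν x⟫ : ℝ) : ℂ) with hF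
      have hFcont : ContinuousOn F (frontier D) :=
        hμcont.mul (Complex.continuous_ofReal.comp_continuousOn
          ((continuousOn_const.sub ((continuousOn_const.inner (𝕜 := ℝ) hνcont).smul hνcont)).inner (𝕜 := ℝ)
            (continuousOn_const.sub ((continuousOn_const.inner (𝕜 := ℝ) hνcont).smul hνcont))))
      have hFexp : ∀ c : EuclideanSpace ℝ (Fin d),
          ∫ x in frontier D, F x * ((Real.exp ⟪c, x⟫ : ℝ) : ℂ) ∂σ = 0 := by
        intro c
        set a : EuclideanSpace ℝ (Fin d) := (1/2 : ℝ) • c with hadef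
        have haa : a + a = c := by
          rw [hadef, ← add_smul]
          norm_num
        have hE1 : ∀ x : EuclideanSpace ℝ (Fin d),
            Real.exp ⟪a + e, x⟫ * Real.exp ⟪a - e, x⟫ = Real.exp ⟪c, x⟫ := by
          intro x
          rw [← Real.exp_add, ← inner_add_left]
          congr 2
          rw [show a + e + (a - e) = a + a by abel, haa]
        have hE2 : ∀ x : EuclideanSpace ℝ (Fin d),
            Real.exp ⟪a, x⟫ * Real.exp ⟪a, x⟫ = Real.exp ⟪c, x⟫ := by
          intro x
          rw [← Real.exp_add, ← inner_add_left, haa]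
        have hkey2 : ∀ x : EuclideanSpace ℝ (Fin d),
            (⟪(a + e) - ⟪a + e, ν x⟫ • ν x, (a - e) - ⟪a - e, ν x⟫ • ν x⟫ : ℝ)
            = ⟪a - ⟪a, ν x⟫ • ν x, a - ⟪a, ν x⟫ • ν x⟫
              - ⟪e - ⟪e, ν x⟫ • ν x, e - ⟪e, ν x⟫ • ν x⟫ := by
          intro x
          have hPa : (a + e) - ⟪a + e, ν x⟫ • ν x
              = (a - ⟪a, ν x⟫ • ν x) + (e - ⟪e, ν x⟫ • ν x) := by
            rw [inner_add_left, add_smul]; abel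
          have hPs : (a - e) - ⟪a - e, ν x⟫ • ν x
              = (a - ⟪a, ν x⟫ • ν x) - (e - ⟪e, ν x⟫ • ν x) := by
            rw [inner_sub_left, sub_smul]; abel
          have habs : ∀ A B : EuclideanSpace ℝ (Fin d),
              (⟪A + B, A - B⟫ : ℝ) = ⟪A, A⟫ - ⟪B, B⟫ := by
            intro A B
            rw [inner_add_left, inner_sub_right, inner_sub_right, real_inner_comm B A]
            ring
          rw [hPa, hPs, habs]
        have hfun : (fun x => F x * ((Real.exp ⟪c, x⟫ : ℝ) : ℂ))
            = fun x =>
              μ x * ((⟪a - ⟪a, ν x⟫ • ν x, a - ⟪a, ν x⟫ • ν x⟫ : ℝ) : ℂ)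
                * ((Real.exp ⟪a, x⟫ * Real.exp ⟪a, x⟫ : ℝ) : ℂ)
              - μ x * ((⟪(a + e) - ⟪a + e, ν x⟫ • ν x, (a - e) - ⟪a - e, ν x⟫ • ν x⟫ : ℝ) : ℂ)
                * ((Real.exp ⟪a + e, x⟫ * Real.exp ⟪a - e, x⟫ : ℝ) : ℂ) := by
          funext x
          rw [hF, hkey2 x, hE1 x, hE2 x]
          push_cast
          ring
        rw [hfun]
        rw [integral_sub
          (((hpaircont a a).integrableOn_compact' hΓc hΓm))
          (((hpaircont (a + e) (a - e)).integrableOn_compact' hΓc hΓm))]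
        rw [hpair a a, hpair (a + e) (a - e), sub_zero]
      -- F vanishes at x₀ by key_vanish, and F x₀ = μ x₀
      have hFzero : ∀ x ∈ frontier D, F x = 0 := by
        refine key_vanish (frontier D) hΓc hΓm σ hσpos F hFcont ?_
        intro x₁ hx₁ r hr
        obtain ⟨b, hbc, hbnn, hb1, hb0⟩ := hbump x₁ r hr
        refine ⟨b, hbc.continuousOn, fun x _ => hbnn x, by rw [hb1]; norm_num,
          fun x _ hxb => hb0 x hxb, ?_⟩
        exact exp_dense_integral_zero (frontier D) hΓc hΓm σ F hFcont hFexp b hbc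
      have hFx₀ := hFzero x₀ hx₀
      rw [hF] at hFx₀
      simp only [he2, zero_smul, sub_zero] at hFx₀
      rw [real_inner_self_eq_norm_mul_norm, he1] at hFx₀
      simpa using hFx₀
    exact fun x hx => ⟨hlam0 x hx, hμ0 x hx⟩
end

section
/- Let Γ = ∂D be C², u, w smooth functions near Γ, λ, μ ∈ C¹(Γ), and define Mf := div_Γ(μ∇_Γ f) and L f := Mf + λf. Suppose u and w satisfy the GIBC ∂u/∂ν = −Lu and ∂w/∂ν = −Lw on Γ. Then the following pointwise identity holds on Γ for the combination appearing in the shape derivative: ∫_Γ [ (ε·ν)(Lu)(Lw) − λ(ε·ν)w(Lu) − λ(ε·ν)u(Lw) + μ∇_Γ((ε·ν)Lu)·∇_Γ w + μ∇_Γ((ε·ν)Lw)·∇_Γ u ] ds = −∫_Γ (ε·ν)(Lu)(Lw) ds. -/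
open MeasureTheory

/-!
Integrating by parts, the two gradient terms become `-∫ (ε·ν)(Lu)(Mw)` and `-∫ (ε·ν)(Lw)(Mu)`.
Since `M = L - λ`, these equal `-∫ (ε·ν)(Lu)(Lw)` twice, corrected by exactly the two `λ`-terms
of the integrand, so everything but `-∫ (ε·ν)(Lu)(Lw)` cancels.
-/

section

variable {Γ : Type*} [MeasurableSpace Γ] {σ : Measure Γ}

theorem integral_sub_sub_add_add_eq_neg {E : Type*} [NormedAddCommGroup E] [NormedSpace ℝ E]
    {a b c p q : Γ → E} (ha : Integrable a σ) (hb : Integrable b σ) (hc : Integrable c σ)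
    (hp : Integrable p σ) (hq : Integrable q σ)
    (hpab : ∫ x, p x ∂σ = -∫ x, (a x - b x) ∂σ) (hqac : ∫ x, q x ∂σ = -∫ x, (a x - c x) ∂σ) :
    ∫ x, (a x - b x - c x + p x + q x) ∂σ = -∫ x, a x ∂σ := by
  have hab := ha.sub hb
  have habc := hab.sub hc
  rw [integral_add (f := fun x => a x - b x - c x + p x) (habc.add hp) hq,
    integral_add (f := fun x => a x - b x - c x) habc hp,
    integral_sub (f := fun x => a x - b x) hab hc, integral_sub ha hb, hpab, hqac,
    integral_sub ha hb, integral_sub ha hc]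
  abel

theorem integral_mul_sum_grad_mul_grad_eq_neg {n : ℕ} {grad : (Γ → ℂ) → Γ → Fin n → ℂ}
    {Mμ : (Γ → ℂ) → Γ → ℂ} {μ : Γ → ℂ}
    (hIBP : ∀ f g : Γ → ℂ,
      ∫ x, μ x * ∑ i, grad f x i * grad g x i ∂σ = -∫ x, Mμ f x * g x ∂σ)
    (f g : Γ → ℂ) :
    ∫ x, μ x * ∑ i, grad f x i * grad g x i ∂σ = -∫ x, f x * Mμ g x ∂σ := by
  simp_rw [mul_comm (grad f _ _), mul_comm (f _)]
  exact hIBP g f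

end

theorem stmt16_general {Γ : Type*} [MeasurableSpace Γ] (σ : Measure Γ) (n : ℕ)
    (grad : (Γ → ℂ) → Γ → Fin n → ℂ) (Mμ : (Γ → ℂ) → Γ → ℂ)
    (lam μ εν u w : Γ → ℂ)
    (hIBP : ∀ f g : Γ → ℂ,
      ∫ x, μ x * ∑ i, grad f x i * grad g x i ∂σ = -∫ x, Mμ f x * g x ∂σ)
    (hi1 : Integrable (fun x => εν x * (Mμ u x + lam x * u x) * (Mμ w x + lam x * w x)) σ)
    (hi2 : Integrable (fun x => lam x * εν x * w x * (Mμ u x + lam x * u x)) σ)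
    (hi3 : Integrable (fun x => lam x * εν x * u x * (Mμ w x + lam x * w x)) σ)
    (hi4 : Integrable (fun x => μ x * ∑ i,
      grad (fun y => εν y * (Mμ u y + lam y * u y)) x i * grad w x i) σ)
    (hi5 : Integrable (fun x => μ x * ∑ i,
      grad (fun y => εν y * (Mμ w y + lam y * w y)) x i * grad u x i) σ) :
    ∫ x, (εν x * (Mμ u x + lam x * u x) * (Mμ w x + lam x * w x)
        - lam x * εν x * w x * (Mμ u x + lam x * u x)
        - lam x * εν x * u x * (Mμ w x + lam x * w x)
        + μ x * ∑ i, grad (fun y => εν y * (Mμ u y + lam y * u y)) x i * grad w x i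
        + μ x * ∑ i, grad (fun y => εν y * (Mμ w y + lam y * w y)) x i * grad u x i) ∂σ
      = -∫ x, εν x * (Mμ u x + lam x * u x) * (Mμ w x + lam x * w x) ∂σ := by
  refine integral_sub_sub_add_add_eq_neg hi1 hi2 hi3 hi4 hi5 ?_ ?_
  all_goals
    rw [integral_mul_sum_grad_mul_grad_eq_neg hIBP]
    congr 2 with x
    ring

/-- Integration-by-parts identity on the closed surface `Γ = ∂D`
(surface measure `σ`). Let `grad` be the tangential gradient, `Mμ f = div_Γ(μ∇_Γ f)`
(so that `∫ μ ∇_Γ f·∇_Γ g = −∫ (Mμ f) g`, hypothesis `hIBP`) and `L f = Mμ f + λf`.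
If `u`, `w` satisfy the GIBC `∂u/∂ν = −Lu`, `∂w/∂ν = −Lw` on `Γ`, then
`∫_Γ [(ε·ν)(Lu)(Lw) − λ(ε·ν)w(Lu) − λ(ε·ν)u(Lw) + μ∇_Γ((ε·ν)Lu)·∇_Γ w
  + μ∇_Γ((ε·ν)Lw)·∇_Γ u] ds = −∫_Γ (ε·ν)(Lu)(Lw) ds`. -/
theorem stmt16 {Γ : Type*} [MeasurableSpace Γ] (σ : Measure Γ) (n : ℕ)
    (grad : (Γ → ℂ) → Γ → Fin n → ℂ) (Mμ : (Γ → ℂ) → Γ → ℂ)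
    (lam μ εν u w dnu dnw : Γ → ℂ)
    (hIBP : ∀ f g : Γ → ℂ,
      ∫ x, μ x * ∑ i, grad f x i * grad g x i ∂σ = -∫ x, Mμ f x * g x ∂σ)
    (hu : ∀ x, dnu x = -(Mμ u x + lam x * u x))
    (hw : ∀ x, dnw x = -(Mμ w x + lam x * w x))
    (hi1 : Integrable (fun x => εν x * (Mμ u x + lam x * u x) * (Mμ w x + lam x * w x)) σ)
    (hi2 : Integrable (fun x => lam x * εν x * w x * (Mμ u x + lam x * u x)) σ)
    (hi3 : Integrable (fun x => lam x * εν x * u x * (Mμ w x + lam x * w x)) σ)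
    (hi4 : Integrable (fun x => μ x * ∑ i,
      grad (fun y => εν y * (Mμ u y + lam y * u y)) x i * grad w x i) σ)
    (hi5 : Integrable (fun x => μ x * ∑ i,
      grad (fun y => εν y * (Mμ w y + lam y * w y)) x i * grad u x i) σ) :
    ∫ x, (εν x * (Mμ u x + lam x * u x) * (Mμ w x + lam x * w x)
        - lam x * εν x * w x * (Mμ u x + lam x * u x)
        - lam x * εν x * u x * (Mμ w x + lam x * w x)
        + μ x * ∑ i, grad (fun y => εν y * (Mμ u y + lam y * u y)) x i * grad w x i
        + μ x * ∑ i, grad (fun y => εν y * (Mμ w y + lam y * w y)) x i * grad u x i) ∂σ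
      = -∫ x, εν x * (Mμ u x + lam x * u x) * (Mμ w x + lam x * w x) ∂σ :=
  stmt16_general σ n grad Mμ lam μ εν u w hIBP hi1 hi2 hi3 hi4 hi5
end
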